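/- arXiv:1604.03653 — 4 statements merged into one kernel-verified Lean document; each statement's English description precedes it below -/
import Mathlib

section
/- Suppose k satisfies the gradient bound (1.10). Then both mixed norms sup_{ζ∈ℝ³} ∫_{ℝ³} |∇_ζ k(ζ,ζ⁎)| dζ⁎ and sup_{ζ⁎∈ℝ³} ∫_{ℝ³} |∇_ζ k(ζ,ζ⁎)| dζ are finite, with a bound depending only on γ, δ and C₂. -/
open MeasureTheory Real Set
open scoped ENNReal NNReal

noncomputable section

/-- Three-dimensional Euclidean space. -/
abbrev E3 : Type := EuclideanSpace ℝ (Fin 3)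

/-- Backward exit time: `τ₋(x,ζ) = sup{t ≥ 0 : x - sζ ∈ Ω for all s ∈ [0,t)}`. -/
def tauMinus (Ω : Set E3) (x ζ : E3) : ℝ :=
  sSup {t : ℝ | 0 ≤ t ∧ ∀ s ∈ Set.Ico (0 : ℝ) t, x - s • ζ ∈ Ω}

/-- Backward exit point: `p(x,ζ) = x - τ₋(x,ζ) ζ`. -/
def exitPoint (Ω : Set E3) (x ζ : E3) : E3 := x - tauMinus Ω x ζ • ζ

/-- The incoming boundary set `Γ₋`. -/
def GammaMinus (Ω : Set E3) : Set (E3 × E3) :=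
  {z | z.1 ∈ frontier Ω ∧ ∃ t : ℝ, 0 < t ∧ z.1 + t • z.2 ∈ Ω}

/-- Collision frequency `ν(ζ) = β₀ ∫ e^{-|η|²} |η-ζ|^γ dη`. -/
def nu (γ β₀ : ℝ) (ζ : E3) : ℝ :=
  β₀ * ∫ η : E3, Real.exp (-‖η‖ ^ 2) * ‖η - ζ‖ ^ γ

/-- The Grad-type pointwise bound (1.9) on the collision kernel `k`. -/
def KernelBound (γ δ C₁ : ℝ) (k : E3 → E3 → ℝ) : Prop :=
  ∀ ζ ζs : E3, ζ ≠ ζs →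
    |k ζ ζs| ≤ C₁ * ‖ζ - ζs‖⁻¹ * (1 + ‖ζ‖ + ‖ζs‖) ^ (-(1 - γ)) *
      Real.exp (-((1 - δ) / 4) *
        (‖ζ - ζs‖ ^ 2 + ((‖ζ‖ ^ 2 - ‖ζs‖ ^ 2) / ‖ζ - ζs‖) ^ 2))

/-- The gradient bound (1.10) on the collision kernel `k` (first-variable gradient),
together with differentiability of `k (·, ζ⁎)`. -/
def KernelGradBound (γ δ C₂ : ℝ) (k : E3 → E3 → ℝ) : Prop :=
  (∀ ζs : E3, Differentiable ℝ fun ζ => k ζ ζs) ∧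
  ∀ ζ ζs : E3, ζ ≠ ζs →
    ‖fderiv ℝ (fun w => k w ζs) ζ‖ ≤
      C₂ * (1 + ‖ζ‖) * (‖ζ - ζs‖ ^ 2)⁻¹ * (1 + ‖ζ‖ + ‖ζs‖) ^ (-(1 - γ)) *
        Real.exp (-((1 - δ) / 4) *
          (‖ζ - ζs‖ ^ 2 + ((‖ζ‖ ^ 2 - ‖ζs‖ ^ 2) / ‖ζ - ζs‖) ^ 2))

/-- The integral operator `K(f)(x,ζ) = ∫ k(ζ,ζ⁎) f(x,ζ⁎) dζ⁎`. -/
def Kop (k : E3 → E3 → ℝ) (f : E3 → E3 → ℝ) (x ζ : E3) : ℝ :=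
  ∫ ζs : E3, k ζ ζs * f x ζs

/-- `f` is a mild solution of the stationary linearized Boltzmann equation:
it satisfies the exponential (Duhamel) integral form along backward characteristics,
a.e. on `Ω × ℝ³`. -/
def MildSolution (Ω : Set E3) (γ β₀ : ℝ) (k f : E3 → E3 → ℝ) : Prop :=
  ∀ᵐ z : E3 × E3, z.1 ∈ Ω →
    f z.1 z.2 =
      f (exitPoint Ω z.1 z.2) z.2 * Real.exp (-(nu γ β₀ z.2) * tauMinus Ω z.1 z.2) +
      ∫ s in (0 : ℝ)..(tauMinus Ω z.1 z.2),
        Real.exp (-(nu γ β₀ z.2) * s) * Kop k f (z.1 - s • z.2) z.2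

/-- The function `G` from the mixture lemma, written as an integral over space
and speed:
`G(x₀,ζ) = ∫₀^∞ ∫_Ω k(ζ, ρ(x₀−y)/|x₀−y|) e^{−ν(ρ)|x₀−y|/ρ} K(f)(y, ρ(x₀−y)/|x₀−y|) ρ|x₀−y|⁻² dy dρ`. -/
def Gfun (Ω : Set E3) (γ β₀ : ℝ) (k f : E3 → E3 → ℝ) (x₀ ζ : E3) : ℝ :=
  ∫ ρ in Set.Ioi (0 : ℝ), ∫ y in Ω,
    k ζ ((ρ / ‖x₀ - y‖) • (x₀ - y)) *
      Real.exp (-(nu γ β₀ ((ρ / ‖x₀ - y‖) • (x₀ - y))) * (‖x₀ - y‖ / ρ)) *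
      Kop k f y ((ρ / ‖x₀ - y‖) • (x₀ - y)) * (ρ / ‖x₀ - y‖ ^ 2)

/-- The term `III(x,ζ) = ∫₀^{τ₋(x,ζ)} e^{−ν(ζ)s} G(x−ζs, ζ) ds`. -/
def IIIfun (Ω : Set E3) (γ β₀ : ℝ) (k f : E3 → E3 → ℝ) (x ζ : E3) : ℝ :=
  ∫ s in (0 : ℝ)..(tauMinus Ω x ζ),
    Real.exp (-(nu γ β₀ ζ) * s) * Gfun Ω γ β₀ k f (x - s • ζ) ζ

/-- The damped transport of boundary data: `I(x,ζ) = g(p(x,ζ),ζ) e^{−ν(ζ)τ₋(x,ζ)}`. -/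
def Ifun (Ω : Set E3) (γ β₀ : ℝ) (g : E3 → E3 → ℝ) (x ζ : E3) : ℝ :=
  g (exitPoint Ω x ζ) ζ * Real.exp (-(nu γ β₀ ζ) * tauMinus Ω x ζ)

/-- The twice-iterated boundary term
`II(x,ζ) = ∫₀^{τ₋(x,ζ)} ∫ e^{−ν(ζ)s} k(ζ,ζ′) e^{−ν(ζ′)τ₋(x−ζs,ζ′)} g(p(x−ζs,ζ′),ζ′) dζ′ ds`. -/
def IIfun (Ω : Set E3) (γ β₀ : ℝ) (k g : E3 → E3 → ℝ) (x ζ : E3) : ℝ :=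
  ∫ s in (0 : ℝ)..(tauMinus Ω x ζ), ∫ ζ' : E3,
    Real.exp (-(nu γ β₀ ζ) * s) * k ζ ζ' *
      Real.exp (-(nu γ β₀ ζ') * tauMinus Ω (x - s • ζ) ζ') *
      g (exitPoint Ω (x - s • ζ) ζ') ζ'

open scoped RealInnerProductSpace

/-!
Write `u = ζ - ζ⁎` and `c = (1 - δ) / 4`. Since `2⟪ζ, u⟫ = (|ζ|² - |ζ⁎|²) + |u|²` and
`2⟪ζ⁎, u⟫ = (|ζ|² - |ζ⁎|²) - |u|²`, the exponent in (1.10) dominates `|u|² / 4 + |⟪v, u⟫| / 2`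
for `v = ζ` as well as for `v = ζ⁎`, while the algebraic prefactor is at most
`(1 + |v|)^γ (1 + |u|)`. So for `v` the variable held fixed in either mixed norm, `|∇_ζ k|` is
bounded by a constant times `(1 + |v|)^γ |u|⁻² exp(-(c/8)|u|² - (c/2)|⟪v, u⟫|)`.
Rotating `v` onto the first axis and splitting
`|u|⁻² ≤ |u₁|^(-θ) |u₂|^(-(1 - θ/2)) |u₃|^(-(1 - θ/2))` turns the `u`-integral into a product
of one-dimensional Gamma-type integrals; the one along `v` is `O((1 + |v|)^(θ - 1))`, which
absorbs the weight `(1 + |v|)^γ` as soon as `θ ≤ 1 - γ`.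
-/

lemma lintegral_comp_abs (g : ℝ → ℝ≥0∞) : ∫⁻ t, g |t| = 2 * ∫⁻ t in Ioi 0, g t := by
  have hpos : ∫⁻ t in Ioi 0, g |t| = ∫⁻ t in Ioi 0, g t :=
    setLIntegral_congr_fun measurableSet_Ioi fun t ht => by rw [abs_of_pos ht]
  have hneg : ∫⁻ t in Iic 0, g |t| = ∫⁻ t in Ioi 0, g t := by
    have h := (Measure.measurePreserving_neg (volume : Measure ℝ)).setLIntegral_comp_preimage_emb
      (Homeomorph.neg ℝ).measurableEmbedding (fun t => g |t|) (Iic 0)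
    simp only [abs_neg, neg_preimage, neg_Iic, neg_zero] at h
    rw [← h, setLIntegral_congr Ioi_ae_eq_Ici.symm, hpos]
  rw [← lintegral_add_compl _ measurableSet_Iic, compl_Iic, hneg, hpos, two_mul]

def powExpProfile (s l b t : ℝ) : ℝ := |t| ^ (-s) * exp (-(l * t ^ 2 + b * |t|))

lemma powExpProfile_nonneg (s l b t : ℝ) : 0 ≤ powExpProfile s l b t := by
  unfold powExpProfile; positivity

lemma measurable_powExpProfile (s l b : ℝ) : Measurable (powExpProfile s l b) := by
  unfold powExpProfile; fun_prop

/-- `l t² ≥ l (2t - 1)` trades the Gaussian for an exponential, reducing to a Gamma integral. -/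
lemma lintegral_powExpProfile_le {s l b : ℝ} (hs : s < 1) (hl : 0 < l) (hb : 0 ≤ b) :
    ∫⁻ t, ENNReal.ofReal (powExpProfile s l b t) ≤
      ENNReal.ofReal (2 * exp l * Gamma (1 - s) * (2 * l + b) ^ (s - 1)) := by
  set r := 2 * l + b
  have hr : 0 < r := by positivity
  have hpt : ∀ t ∈ Ioi (0 : ℝ), ENNReal.ofReal (t ^ (-s) * exp (-(l * t ^ 2 + b * t))) ≤
      ENNReal.ofReal (exp l * (t ^ ((1 - s) - 1) * exp (-(r * t)))) := by
    intro t ht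
    refine ENNReal.ofReal_le_ofReal ?_
    rw [show (1 - s) - 1 = -s by ring, mul_left_comm, ← exp_add]
    refine mul_le_mul_of_nonneg_left (exp_le_exp.2 ?_) (rpow_nonneg (le_of_lt ht) _)
    nlinarith [mul_nonneg hl.le (sq_nonneg (t - 1))]
  have hint : IntegrableOn (fun t => exp l * (t ^ ((1 - s) - 1) * exp (-(r * t)))) (Ioi 0) := by
    have h := integrableOn_rpow_mul_exp_neg_mul_rpow (s := (1 - s) - 1) (by linarith) one_pos hr
    simp only [rpow_one, neg_mul] at h
    exact h.const_mul _
  have heven := lintegral_comp_abs fun t => ENNReal.ofReal (t ^ (-s) * exp (-(l * t ^ 2 + b * t)))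
  simp only [sq_abs] at heven
  calc ∫⁻ t, ENNReal.ofReal (powExpProfile s l b t)
      = 2 * ∫⁻ t in Ioi 0, ENNReal.ofReal (t ^ (-s) * exp (-(l * t ^ 2 + b * t))) := heven
    _ ≤ 2 * ∫⁻ t in Ioi 0, ENNReal.ofReal (exp l * (t ^ ((1 - s) - 1) * exp (-(r * t)))) :=
        mul_le_mul_right (setLIntegral_mono (by fun_prop) hpt) _
    _ = ENNReal.ofReal (2 * exp l * Gamma (1 - s) * r ^ (s - 1)) := by
        rw [← ofReal_integral_eq_lintegral_ofReal hint
            (ae_restrict_of_forall_mem measurableSet_Ioi fun t ht =>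
              mul_nonneg (exp_pos _).le (mul_nonneg (rpow_nonneg (le_of_lt ht) _) (exp_pos _).le)),
          integral_const_mul, integral_rpow_mul_exp_neg_mul_Ioi (by linarith) hr, one_div,
          inv_rpow hr.le, ← rpow_neg hr.le, neg_sub, ← ENNReal.ofReal_ofNat 2,
          ← ENNReal.ofReal_mul zero_le_two]
        ring_nf

lemma inv_sq_add_sq_add_sq_le {θ β t y z : ℝ} (hθ : 0 ≤ θ) (hβ : 0 ≤ β) (hθβ : θ / 2 + β = 1)
    (ht : t ≠ 0) (hy : y ≠ 0) (hz : z ≠ 0) :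
    (t ^ 2 + y ^ 2 + z ^ 2)⁻¹ ≤ |t| ^ (-θ) * |y| ^ (-β) * |z| ^ (-β) := by
  set S := t ^ 2 + y ^ 2 + z ^ 2
  have hS : 0 < S := by positivity
  have ht' : |t| ≤ S ^ (1 / 2 : ℝ) := by
    rw [← sqrt_eq_rpow]
    exact abs_le_sqrt (by nlinarith [sq_nonneg y, sq_nonneg z])
  have hyz : |y| * |z| ≤ S := by nlinarith [sq_nonneg (|y| - |z|), sq_abs y, sq_abs z, sq_nonneg t]
  have hprod : |t| ^ θ * |y| ^ β * |z| ^ β ≤ S :=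
    calc |t| ^ θ * |y| ^ β * |z| ^ β = |t| ^ θ * (|y| * |z|) ^ β := by
          rw [mul_assoc, mul_rpow (abs_nonneg y) (abs_nonneg z)]
      _ ≤ (S ^ (1 / 2 : ℝ)) ^ θ * S ^ β := by gcongr
      _ = S := by rw [← rpow_mul hS.le, ← rpow_add hS, one_div_mul_eq_div, hθβ, rpow_one]
  have hpos : 0 < |t| ^ θ * |y| ^ β * |z| ^ β := by positivity
  calc S⁻¹ ≤ (|t| ^ θ * |y| ^ β * |z| ^ β)⁻¹ := inv_anti₀ hpos hprod
    _ = |t| ^ (-θ) * |y| ^ (-β) * |z| ^ (-β) := by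
        rw [mul_inv, mul_inv, rpow_neg (abs_nonneg t), rpow_neg (abs_nonneg y),
          rpow_neg (abs_nonneg z)]

lemma lintegral_fin_nat_prod_volume_eq_prod {E : Type*} [MeasureSpace E]
    [SigmaFinite (volume : Measure E)] {n : ℕ} (f : Fin n → E → ℝ≥0∞) (hf : ∀ i, Measurable (f i)) :
    ∫⁻ x : Fin n → E, ∏ i, f i (x i) = ∏ i, ∫⁻ x, f i x := by
  induction n with
  | zero => simp [volume_pi]
  | succ n ih =>
    have hg : Measurable fun y : Fin n → E => ∏ i, f i.succ (y i) :=
      Finset.measurable_prod _ fun i _ => (hf i.succ).comp (measurable_pi_apply i)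
    calc ∫⁻ x : Fin (n + 1) → E, ∏ i, f i (x i)
        = ∫⁻ x : E × (Fin n → E), f 0 x.1 * ∏ i : Fin n, f i.succ (x.2 i) := by
          rw [volume_pi, ← (measurePreserving_piFinSuccAbove (fun _ => volume) 0).symm
            |>.lintegral_comp_emb (MeasurableEquiv.measurableEmbedding _)]
          simp only [Fin.prod_univ_succ, MeasurableEquiv.piFinSuccAbove_symm_apply,
            Fin.insertNthEquiv, Equiv.coe_fn_mk, Fin.insertNth_zero', Fin.cons_zero, Fin.cons_succ]
          rfl
      _ = ∏ i, ∫⁻ x, f i x := by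
          rw [Measure.volume_eq_prod, lintegral_prod_mul (hf 0).aemeasurable hg.aemeasurable,
            ih _ fun i => hf i.succ, Fin.prod_univ_succ]

lemma inv_sq_mul_exp_le_powExpProfile {θ l a t y z : ℝ} (hθ₀ : 0 ≤ θ) (hθ₂ : θ ≤ 2)
    (ht : t ≠ 0) (hy : y ≠ 0) (hz : z ≠ 0) :
    (t ^ 2 + y ^ 2 + z ^ 2)⁻¹ * exp (-(l * (t ^ 2 + y ^ 2 + z ^ 2) + a * |t|)) ≤
      powExpProfile θ l a t * powExpProfile (1 - θ / 2) l 0 y *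
        powExpProfile (1 - θ / 2) l 0 z := by
  have hexp : exp (-(l * (t ^ 2 + y ^ 2 + z ^ 2) + a * |t|)) =
      exp (-(l * t ^ 2 + a * |t|)) * exp (-(l * y ^ 2 + 0 * |y|)) *
        exp (-(l * z ^ 2 + 0 * |z|)) := by
    rw [← exp_add, ← exp_add]; ring_nf
  rw [hexp]
  calc _ ≤ (|t| ^ (-θ) * |y| ^ (-(1 - θ / 2)) * |z| ^ (-(1 - θ / 2))) *
        (exp (-(l * t ^ 2 + a * |t|)) * exp (-(l * y ^ 2 + 0 * |y|)) *
          exp (-(l * z ^ 2 + 0 * |z|))) :=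
      mul_le_mul_of_nonneg_right
        (inv_sq_add_sq_add_sq_le hθ₀ (by linarith) (by ring) ht hy hz) (by positivity)
    _ = _ := by simp only [powExpProfile]; ring

lemma EuclideanSpace.norm_sq_fin_three (x : EuclideanSpace ℝ (Fin 3)) :
    ‖x‖ ^ 2 = x 0 ^ 2 + x 1 ^ 2 + x 2 ^ 2 := by
  rw [EuclideanSpace.norm_sq_eq, Fin.sum_univ_three]
  simp only [Real.norm_eq_abs, sq_abs]

lemma lintegral_inv_sq_mul_exp_le_prod {θ l a : ℝ} (hθ₀ : 0 ≤ θ) (hθ₂ : θ ≤ 2) :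
    ∫⁻ y : Fin 3 → ℝ, ENNReal.ofReal ((y 0 ^ 2 + y 1 ^ 2 + y 2 ^ 2)⁻¹ *
        exp (-(l * (y 0 ^ 2 + y 1 ^ 2 + y 2 ^ 2) + a * |y 0|))) ≤
      (∫⁻ t, ENNReal.ofReal (powExpProfile θ l a t)) *
        (∫⁻ t, ENNReal.ofReal (powExpProfile (1 - θ / 2) l 0 t)) *
          ∫⁻ t, ENNReal.ofReal (powExpProfile (1 - θ / 2) l 0 t) := by
  set F : Fin 3 → ℝ → ℝ≥0∞ := ![fun t => ENNReal.ofReal (powExpProfile θ l a t),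
    fun t => ENNReal.ofReal (powExpProfile (1 - θ / 2) l 0 t),
    fun t => ENNReal.ofReal (powExpProfile (1 - θ / 2) l 0 t)]
  have hF : ∀ i, Measurable (F i) := by
    intro i; fin_cases i <;> exact (measurable_powExpProfile _ _ _).ennreal_ofReal
  have hpt : ∀ᵐ y : Fin 3 → ℝ ∂volume,
      ENNReal.ofReal ((y 0 ^ 2 + y 1 ^ 2 + y 2 ^ 2)⁻¹ *
        exp (-(l * (y 0 ^ 2 + y 1 ^ 2 + y 2 ^ 2) + a * |y 0|))) ≤ ∏ i, F i (y i) := by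
    filter_upwards [Measure.ae_eval_ne _ 0 0, Measure.ae_eval_ne _ 1 0,
      Measure.ae_eval_ne _ 2 0] with y h0 h1 h2
    refine (ENNReal.ofReal_le_ofReal
      (inv_sq_mul_exp_le_powExpProfile hθ₀ hθ₂ h0 h1 h2)).trans_eq ?_
    rw [ENNReal.ofReal_mul (mul_nonneg (powExpProfile_nonneg ..) (powExpProfile_nonneg ..)),
      ENNReal.ofReal_mul (powExpProfile_nonneg ..), Fin.prod_univ_three]
    rfl
  calc _ ≤ ∫⁻ y : Fin 3 → ℝ, ∏ i, F i (y i) := lintegral_mono_ae hpt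
    _ = ∏ i, ∫⁻ t, F i t := lintegral_fin_nat_prod_volume_eq_prod F hF
    _ = _ := Fin.prod_univ_three _

lemma exists_lintegral_inv_norm_sq_mul_exp_le {θ l : ℝ} (hθ₀ : 0 < θ) (hθ₁ : θ < 1)
    (hl : 0 < l) :
    ∃ C, 0 < C ∧ ∀ a, 0 ≤ a →
      ∫⁻ x : E3, ENNReal.ofReal ((‖x‖ ^ 2)⁻¹ * exp (-(l * ‖x‖ ^ 2 + a * |x 0|))) ≤
        ENNReal.ofReal (C * (2 * l + a) ^ (θ - 1)) := by
  set β := 1 - θ / 2 with hβ_def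
  have hβ : β < 1 := by linarith
  set B := 2 * exp l * Gamma (1 - β) * (2 * l) ^ (β - 1)
  have hB : 0 < B := by have := Gamma_pos_of_pos (by linarith : 0 < 1 - β); positivity
  have hβB : ∫⁻ t, ENNReal.ofReal (powExpProfile β l 0 t) ≤ ENNReal.ofReal B :=
    (lintegral_powExpProfile_le hβ hl le_rfl).trans_eq (by rw [add_zero])
  refine ⟨2 * exp l * Gamma (1 - θ) * B ^ 2, by positivity, fun a ha => ?_⟩
  calc ∫⁻ x : E3, ENNReal.ofReal ((‖x‖ ^ 2)⁻¹ * exp (-(l * ‖x‖ ^ 2 + a * |x 0|)))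
      = ∫⁻ y : Fin 3 → ℝ, ENNReal.ofReal ((y 0 ^ 2 + y 1 ^ 2 + y 2 ^ 2)⁻¹ *
          exp (-(l * (y 0 ^ 2 + y 1 ^ 2 + y 2 ^ 2) + a * |y 0|))) := by
        simp_rw [EuclideanSpace.norm_sq_fin_three]
        exact (PiLp.volume_preserving_ofLp (Fin 3)).lintegral_comp_emb
          (MeasurableEquiv.toLp 2 (Fin 3 → ℝ)).symm.measurableEmbedding
          (fun y : Fin 3 → ℝ => ENNReal.ofReal ((y 0 ^ 2 + y 1 ^ 2 + y 2 ^ 2)⁻¹ *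
            exp (-(l * (y 0 ^ 2 + y 1 ^ 2 + y 2 ^ 2) + a * |y 0|))))
    _ ≤ _ := lintegral_inv_sq_mul_exp_le_prod hθ₀.le (by linarith)
    _ ≤ ENNReal.ofReal (2 * exp l * Gamma (1 - θ) * (2 * l + a) ^ (θ - 1)) *
          ENNReal.ofReal B * ENNReal.ofReal B := by
        gcongr
        exact lintegral_powExpProfile_le hθ₁ hl ha
    _ = ENNReal.ofReal (2 * exp l * Gamma (1 - θ) * B ^ 2 * (2 * l + a) ^ (θ - 1)) := by
        rw [← ENNReal.ofReal_mul (by positivity), ← ENNReal.ofReal_mul (by positivity)]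
        ring_nf

lemma exists_linearIsometryEquiv_inner_eq {ι : Type*} [Fintype ι] [DecidableEq ι] (i : ι)
    (v : EuclideanSpace ℝ ι) :
    ∃ R : EuclideanSpace ℝ ι ≃ₗᵢ[ℝ] EuclideanSpace ℝ ι, ∀ u, ⟪v, u⟫ = ‖v‖ * R u i := by
  set w := EuclideanSpace.single i ‖v‖
  have hw : ‖v‖ = ‖w‖ := by simp [w]
  set R := Submodule.reflection (ℝ ∙ (v - w))ᗮ
  refine ⟨R, fun u => ?_⟩
  rw [← R.inner_map_map v u, Submodule.reflection_sub hw,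
    EuclideanSpace.inner_single_left]
  simp

lemma exists_lintegral_inv_norm_sq_mul_exp_inner_le {θ c₀ c₂ : ℝ} (hθ₀ : 0 < θ) (hθ₁ : θ < 1)
    (hc₀ : 0 < c₀) (hc₂ : 0 < c₂) :
    ∃ C, 0 < C ∧ ∀ v : E3,
      ∫⁻ u : E3, ENNReal.ofReal ((‖u‖ ^ 2)⁻¹ * exp (-(c₀ * ‖u‖ ^ 2 + c₂ * |⟪v, u⟫|))) ≤
        ENNReal.ofReal (C * (1 + ‖v‖) ^ (θ - 1)) := by
  obtain ⟨C, hC, hbound⟩ := exists_lintegral_inv_norm_sq_mul_exp_le hθ₀ hθ₁ hc₀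
  set m := min (2 * c₀) c₂
  have hm : 0 < m := lt_min (by positivity) hc₂
  refine ⟨C * m ^ (θ - 1), by positivity, fun v => ?_⟩
  obtain ⟨R, hR⟩ := exists_linearIsometryEquiv_inner_eq 0 v
  have hmv : m * (1 + ‖v‖) ≤ 2 * c₀ + c₂ * ‖v‖ := by
    nlinarith [min_le_left (2 * c₀) c₂, min_le_right (2 * c₀) c₂, norm_nonneg v]
  calc ∫⁻ u : E3, ENNReal.ofReal ((‖u‖ ^ 2)⁻¹ * exp (-(c₀ * ‖u‖ ^ 2 + c₂ * |⟪v, u⟫|)))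
      = ∫⁻ u : E3, ENNReal.ofReal ((‖R u‖ ^ 2)⁻¹ *
          exp (-(c₀ * ‖R u‖ ^ 2 + c₂ * ‖v‖ * |R u 0|))) := by
        simp_rw [hR, R.norm_map, abs_mul, abs_norm, mul_assoc]
    _ = ∫⁻ x : E3, ENNReal.ofReal ((‖x‖ ^ 2)⁻¹ *
          exp (-(c₀ * ‖x‖ ^ 2 + c₂ * ‖v‖ * |x 0|))) :=
        R.measurePreserving.lintegral_comp_emb R.toMeasurableEquiv.measurableEmbedding
          (fun x : E3 => ENNReal.ofReal ((‖x‖ ^ 2)⁻¹ * exp (-(c₀ * ‖x‖ ^ 2 + c₂ * ‖v‖ * |x 0|))))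
    _ ≤ ENNReal.ofReal (C * (2 * c₀ + c₂ * ‖v‖) ^ (θ - 1)) := hbound _ (by positivity)
    _ ≤ ENNReal.ofReal (C * m ^ (θ - 1) * (1 + ‖v‖) ^ (θ - 1)) := by
        refine ENNReal.ofReal_le_ofReal ?_
        rw [mul_assoc, ← mul_rpow hm.le (by positivity)]
        gcongr ?_ * ?_
        exact rpow_le_rpow_of_nonpos (by positivity) hmv (by linarith)

/-- Majorant of `|∇_ζ k(ζ, ζ⁎)|` in the difference variable `u = ζ - ζ⁎`, centred at
`v ∈ {ζ, ζ⁎}`; the kernel bound (1.10) enters with `c = (1 - δ) / 4`. -/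
def kernelMajorant (γ c : ℝ) (v u : E3) : ℝ :=
  (1 + ‖v‖) ^ γ * ((‖u‖ ^ 2)⁻¹ * exp (-(c / 8 * ‖u‖ ^ 2 + c / 2 * |⟪v, u⟫|)))

lemma exists_lintegral_kernelMajorant_le {γ c : ℝ} (hγ : γ < 1) (hc : 0 < c) :
    ∃ C, 0 < C ∧ ∀ v : E3, ∫⁻ u, ENNReal.ofReal (kernelMajorant γ c v u) ≤ ENNReal.ofReal C := by
  set θ := (1 - max γ 0) / 2
  have hθ₀ : 0 < θ := by have := max_lt hγ one_pos; simp only [θ]; linarith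
  have hθ₁ : θ < 1 := by have := le_max_right γ 0; simp only [θ]; linarith
  have hγθ : γ + (θ - 1) ≤ 0 := by have := le_max_left γ 0; simp only [θ]; linarith
  obtain ⟨C, hC, hbound⟩ :=
    exists_lintegral_inv_norm_sq_mul_exp_inner_le hθ₀ hθ₁ (by positivity : 0 < c / 8)
      (by positivity : 0 < c / 2)
  refine ⟨C, hC, fun v => ?_⟩
  have hv : 0 < 1 + ‖v‖ := by positivity
  simp_rw [kernelMajorant, ENNReal.ofReal_mul (rpow_nonneg hv.le γ)]
  rw [lintegral_const_mul' _ _ ENNReal.ofReal_ne_top]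
  refine (mul_le_mul_right (hbound v) _).trans ?_
  rw [← ENNReal.ofReal_mul (by positivity)]
  refine ENNReal.ofReal_le_ofReal ?_
  calc (1 + ‖v‖) ^ γ * (C * (1 + ‖v‖) ^ (θ - 1)) = C * (1 + ‖v‖) ^ (γ + (θ - 1)) := by
        rw [rpow_add hv]; ring
    _ ≤ C * 1 := by
        gcongr
        exact rpow_le_one_of_one_le_of_nonpos (by linarith [norm_nonneg v]) hγθ
    _ = C := mul_one C

section

variable {F : Type*} [NormedAddCommGroup F]

lemma one_add_norm_mul_rpow_le {γ : ℝ} (hγ : γ ≤ 1) {ζ ζs v : F} (hv : v = ζ ∨ v = ζs) :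
    (1 + ‖ζ‖) * (1 + ‖ζ‖ + ‖ζs‖) ^ (-(1 - γ)) ≤ (1 + ‖v‖) ^ γ * (1 + ‖ζ - ζs‖) := by
  have hv₀ : 0 < 1 + ‖v‖ := by positivity
  have h₁ := norm_nonneg ζ
  have h₂ := norm_nonneg ζs
  have h₃ := norm_nonneg (ζ - ζs)
  have h₄ := norm_le_norm_add_norm_sub' ζ ζs
  have hnum : 1 + ‖ζ‖ ≤ (1 + ‖v‖) * (1 + ‖ζ - ζs‖) := by
    rcases hv with rfl | rfl <;> nlinarith
  have hden : (1 + ‖ζ‖ + ‖ζs‖) ^ (-(1 - γ)) ≤ (1 + ‖v‖) ^ (-(1 - γ)) := by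
    refine rpow_le_rpow_of_nonpos hv₀ ?_ (by linarith)
    rcases hv with rfl | rfl <;> linarith
  calc (1 + ‖ζ‖) * (1 + ‖ζ‖ + ‖ζs‖) ^ (-(1 - γ))
      ≤ (1 + ‖v‖) * (1 + ‖ζ - ζs‖) * (1 + ‖v‖) ^ (-(1 - γ)) := by gcongr
    _ = (1 + ‖v‖) ^ γ * (1 + ‖ζ - ζs‖) := by
        conv_rhs => rw [show γ = 1 + -(1 - γ) by ring, rpow_add hv₀, rpow_one]
        ring

variable [InnerProductSpace ℝ F]

lemma two_mul_abs_inner_sub_le {ζ ζs v : F} (hv : v = ζ ∨ v = ζs) :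
    2 * |⟪v, ζ - ζs⟫| ≤ |‖ζ‖ ^ 2 - ‖ζs‖ ^ 2| + ‖ζ - ζs‖ ^ 2 := by
  have hsub := norm_sub_sq_real ζ ζs
  have hq := sq_nonneg ‖ζ - ζs‖
  have hX := abs_le.1 (le_refl |‖ζ‖ ^ 2 - ‖ζs‖ ^ 2|)
  rcases hv with rfl | rfl
  · rw [inner_sub_right, real_inner_self_eq_norm_sq]
    cases abs_cases (‖v‖ ^ 2 - ⟪v, ζs⟫) <;> linarith
  · rw [inner_sub_right, real_inner_self_eq_norm_sq, real_inner_comm]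
    cases abs_cases (⟪ζ, v⟫ - ‖v‖ ^ 2) <;> linarith

lemma sq_div_four_add_abs_inner_div_two_le {ζ ζs v : F} (hne : ζ ≠ ζs) (hv : v = ζ ∨ v = ζs) :
    ‖ζ - ζs‖ ^ 2 / 4 + |⟪v, ζ - ζs⟫| / 2 ≤
      ‖ζ - ζs‖ ^ 2 + ((‖ζ‖ ^ 2 - ‖ζs‖ ^ 2) / ‖ζ - ζs‖) ^ 2 := by
  have hr : 0 < ‖ζ - ζs‖ := norm_pos_iff.2 (sub_ne_zero.2 hne)
  set r := ‖ζ - ζs‖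
  set X := ‖ζ‖ ^ 2 - ‖ζs‖ ^ 2
  have hinner := two_mul_abs_inner_sub_le hv
  have hs : |X / r| * r = |X| := by rw [abs_div, abs_of_pos hr, div_mul_cancel₀ _ hr.ne']
  nlinarith [sq_nonneg (|X / r| - r / 4), sq_abs (X / r)]

lemma one_add_mul_exp_neg_sq_le {c : ℝ} (hc : 0 < c) (r : ℝ) :
    (1 + r) * exp (-(c / 4 * r ^ 2)) ≤ exp (2 / c) * exp (-(c / 8 * r ^ 2)) := by
  have hsq : 2 / c - r + c / 8 * r ^ 2 = (c * r - 4) ^ 2 / (8 * c) := by field_simp; ring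
  calc (1 + r) * exp (-(c / 4 * r ^ 2)) ≤ exp r * exp (-(c / 4 * r ^ 2)) := by
        gcongr; linarith [add_one_le_exp r]
    _ ≤ exp (2 / c) * exp (-(c / 8 * r ^ 2)) := by
        rw [← exp_add, ← exp_add, exp_le_exp]
        nlinarith [div_nonneg (sq_nonneg (c * r - 4)) (by positivity : (0 : ℝ) ≤ 8 * c)]

end

lemma KernelGradBound.norm_fderiv_le {γ δ C₂ : ℝ} {k : E3 → E3 → ℝ}
    (hk : KernelGradBound γ δ C₂ k) (hγ : γ ≤ 1) (hδ : δ < 1) (hC₂ : 0 ≤ C₂) {ζ ζs v : E3}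
    (hne : ζ ≠ ζs) (hv : v = ζ ∨ v = ζs) :
    ‖fderiv ℝ (fun w => k w ζs) ζ‖ ≤
      C₂ * exp (8 / (1 - δ)) * kernelMajorant γ ((1 - δ) / 4) v (ζ - ζs) := by
  set c := (1 - δ) / 4
  have hc : 0 < c := by simp only [c]; linarith
  set r := ‖ζ - ζs‖
  have hexp : exp (-c * (r ^ 2 + ((‖ζ‖ ^ 2 - ‖ζs‖ ^ 2) / r) ^ 2)) ≤
      exp (-(c / 4 * r ^ 2)) * exp (-(c / 2 * |⟪v, ζ - ζs⟫|)) := by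
    rw [← exp_add]
    have := sq_div_four_add_abs_inner_div_two_le hne hv
    gcongr
    nlinarith
  calc ‖fderiv ℝ (fun w => k w ζs) ζ‖
      ≤ C₂ * (1 + ‖ζ‖) * (r ^ 2)⁻¹ * (1 + ‖ζ‖ + ‖ζs‖) ^ (-(1 - γ)) *
          exp (-c * (r ^ 2 + ((‖ζ‖ ^ 2 - ‖ζs‖ ^ 2) / r) ^ 2)) := hk.2 ζ ζs hne
    _ = C₂ * (r ^ 2)⁻¹ * ((1 + ‖ζ‖) * (1 + ‖ζ‖ + ‖ζs‖) ^ (-(1 - γ))) *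
          exp (-c * (r ^ 2 + ((‖ζ‖ ^ 2 - ‖ζs‖ ^ 2) / r) ^ 2)) := by ring
    _ ≤ C₂ * (r ^ 2)⁻¹ * ((1 + ‖v‖) ^ γ * (1 + r)) *
          (exp (-(c / 4 * r ^ 2)) * exp (-(c / 2 * |⟪v, ζ - ζs⟫|))) := by
        gcongr C₂ * (r ^ 2)⁻¹ * ?_ * ?_
        exact one_add_norm_mul_rpow_le hγ hv
    _ = C₂ * (r ^ 2)⁻¹ * (1 + ‖v‖) ^ γ * ((1 + r) * exp (-(c / 4 * r ^ 2))) *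
          exp (-(c / 2 * |⟪v, ζ - ζs⟫|)) := by ring
    _ ≤ C₂ * (r ^ 2)⁻¹ * (1 + ‖v‖) ^ γ * (exp (2 / c) * exp (-(c / 8 * r ^ 2))) *
          exp (-(c / 2 * |⟪v, ζ - ζs⟫|)) := by
        gcongr C₂ * (r ^ 2)⁻¹ * (1 + ‖v‖) ^ γ * ?_ * _
        exact one_add_mul_exp_neg_sq_le hc r
    _ = C₂ * exp (8 / (1 - δ)) * kernelMajorant γ c v (ζ - ζs) := by
        rw [kernelMajorant, show 2 / c = 8 / (1 - δ) by simp only [c]; field_simp; ring,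
          neg_add, exp_add]
        ring

theorem stmt_3_general (γ δ C₂ : ℝ) (hγ₁ : γ < 1)
    (hδ₁ : δ < 1) (hC₂ : 0 < C₂) :
    ∃ C : ℝ, 0 < C ∧ ∀ k : E3 → E3 → ℝ, KernelGradBound γ δ C₂ k →
      (∀ ζ : E3,
        (∫⁻ ζs : E3, ENNReal.ofReal ‖fderiv ℝ (fun w => k w ζs) ζ‖) ≤
          ENNReal.ofReal C) ∧
      (∀ ζs : E3,
        (∫⁻ ζ : E3, ENNReal.ofReal ‖fderiv ℝ (fun w => k w ζs) ζ‖) ≤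
          ENNReal.ofReal C) := by
  set K := C₂ * exp (8 / (1 - δ))
  obtain ⟨C, hC, hM⟩ := exists_lintegral_kernelMajorant_le hγ₁ (by linarith : 0 < (1 - δ) / 4)
  have hKM : ∀ v : E3, ∫⁻ u, ENNReal.ofReal (K * kernelMajorant γ ((1 - δ) / 4) v u) ≤
      ENNReal.ofReal (K * C) := fun v => by
    simp_rw [ENNReal.ofReal_mul (by positivity : 0 ≤ K)]
    rw [lintegral_const_mul' _ _ ENNReal.ofReal_ne_top]
    exact mul_le_mul_right (hM v) _
  refine ⟨K * C, by positivity, fun k hk => ⟨fun ζ => ?_, fun ζs => ?_⟩⟩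
  · calc ∫⁻ ζs, ENNReal.ofReal ‖fderiv ℝ (fun w => k w ζs) ζ‖
        ≤ ∫⁻ ζs, ENNReal.ofReal (K * kernelMajorant γ ((1 - δ) / 4) ζ (ζ - ζs)) :=
          lintegral_mono_ae <| (Measure.ae_ne volume ζ).mono fun ζs h =>
            ENNReal.ofReal_le_ofReal (hk.norm_fderiv_le hγ₁.le hδ₁ hC₂.le h.symm (.inl rfl))
      _ = ∫⁻ u, ENNReal.ofReal (K * kernelMajorant γ ((1 - δ) / 4) ζ u) :=
          lintegral_sub_left_eq_self (fun u => ENNReal.ofReal (K * kernelMajorant _ _ ζ u)) ζ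
      _ ≤ _ := hKM ζ
  · calc ∫⁻ ζ, ENNReal.ofReal ‖fderiv ℝ (fun w => k w ζs) ζ‖
        ≤ ∫⁻ ζ, ENNReal.ofReal (K * kernelMajorant γ ((1 - δ) / 4) ζs (ζ - ζs)) :=
          lintegral_mono_ae <| (Measure.ae_ne volume ζs).mono fun ζ h =>
            ENNReal.ofReal_le_ofReal (hk.norm_fderiv_le hγ₁.le hδ₁ hC₂.le h (.inr rfl))
      _ = ∫⁻ u, ENNReal.ofReal (K * kernelMajorant γ ((1 - δ) / 4) ζs u) :=
          lintegral_sub_right_eq_self (fun u => ENNReal.ofReal (K * kernelMajorant _ _ ζs u)) ζs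
      _ ≤ _ := hKM ζs

/-- Both mixed `L^∞L¹` norms of `∇_ζ k` are finite, with a bound depending only
on `γ`, `δ`, `C₂`. -/
theorem stmt_3 (γ δ C₂ : ℝ) (hγ₀ : 0 ≤ γ) (hγ₁ : γ < 1)
    (hδ₀ : 0 < δ) (hδ₁ : δ < 1) (hC₂ : 0 < C₂) :
    ∃ C : ℝ, 0 < C ∧ ∀ k : E3 → E3 → ℝ, KernelGradBound γ δ C₂ k →
      (∀ ζ : E3,
        (∫⁻ ζs : E3, ENNReal.ofReal ‖fderiv ℝ (fun w => k w ζs) ζ‖) ≤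
          ENNReal.ofReal C) ∧
      (∀ ζs : E3,
        (∫⁻ ζ : E3, ENNReal.ofReal ‖fderiv ℝ (fun w => k w ζs) ζ‖) ≤
          ENNReal.ofReal C) :=
  stmt_3_general γ δ C₂ hγ₁ hδ₁ hC₂
end
end

section
/- Let σ > 0, ν₀ > 0, M > 0 and A ≥ 0. Suppose g : ℝ³ → ℝ satisfies |g(ζ)−g(ω)| ≤ M|ζ−ω|^σ for all ζ, ω ∈ ℝ³, and suppose w : ℝ³ → ℝ satisfies w(ζ) ≥ ν₀ for all ζ and ∫_{ℝ³} g(ζ)² w(ζ) dζ ≤ A². Then sup_{ζ∈ℝ³} |g(ζ)| ≤ 2 (3/(4πν₀))^{σ/(3+2σ)} M^{3/(3+2σ)} A^{2σ/(3+2σ)}. -/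
open MeasureTheory Real Set
open scoped ENNReal NNReal

noncomputable section

/-! If `a = |g ζ₀|`, Hölder continuity keeps `|g| ≥ a/2` on the ball of radius `r` with
`M r^σ = a/2`, so the weighted `L²` bound gives `(a/2)² ν₀ |B_r| ≤ A²`. Eliminating `r`
between these two relations, `(a/2)^(3+2σ) = M³ ((a/2)² r³)^σ`, yields the bound. -/

open Metric

section HolderLowerBound

variable {E : Type*} [SeminormedAddCommGroup E] {g : E → ℝ} {M σ r : ℝ} {ζ₀ : E}

theorem half_abs_le_abs_of_holder (hM : 0 ≤ M) (hσ : 0 ≤ σ)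
    (hg : ∀ ζ ω : E, |g ζ - g ω| ≤ M * ‖ζ - ω‖ ^ σ) (hr : M * r ^ σ ≤ |g ζ₀| / 2) :
    ∀ ζ ∈ ball ζ₀ r, |g ζ₀| / 2 ≤ |g ζ| := by
  intro ζ hζ
  have hdist : ‖ζ₀ - ζ‖ ≤ r := by
    rw [← dist_eq_norm, dist_comm]
    exact (mem_ball.mp hζ).le
  have hosc : |g ζ₀ - g ζ| ≤ |g ζ₀| / 2 :=
    calc |g ζ₀ - g ζ| ≤ M * ‖ζ₀ - ζ‖ ^ σ := hg ζ₀ ζ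
      _ ≤ M * r ^ σ := by gcongr
      _ ≤ |g ζ₀| / 2 := hr
  linarith [abs_sub_abs_le_abs_sub (g ζ₀) (g ζ)]

variable [MeasurableSpace E] [OpensMeasurableSpace E] {μ : Measure E} {w : E → ℝ} {ν₀ : ℝ}

theorem ofReal_mul_measure_ball_le_lintegral_sq_mul (hM : 0 ≤ M) (hσ : 0 ≤ σ) (hν₀ : 0 ≤ ν₀)
    (hg : ∀ ζ ω : E, |g ζ - g ω| ≤ M * ‖ζ - ω‖ ^ σ) (hw : ∀ ζ, ν₀ ≤ w ζ)
    (hr : M * r ^ σ ≤ |g ζ₀| / 2) :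
    ENNReal.ofReal ((|g ζ₀| / 2) ^ 2 * ν₀) * μ (ball ζ₀ r) ≤
      ∫⁻ ζ, ENNReal.ofReal (g ζ ^ 2 * w ζ) ∂μ := by
  have hpoint : ∀ ζ ∈ ball ζ₀ r, (|g ζ₀| / 2) ^ 2 * ν₀ ≤ g ζ ^ 2 * w ζ := by
    intro ζ hζ
    have hhalf := half_abs_le_abs_of_holder hM hσ hg hr ζ hζ
    rw [← sq_abs (g ζ)]
    have hwζ := hw ζ
    gcongr
  calc ENNReal.ofReal ((|g ζ₀| / 2) ^ 2 * ν₀) * μ (ball ζ₀ r)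
      = ∫⁻ _ in ball ζ₀ r, ENNReal.ofReal ((|g ζ₀| / 2) ^ 2 * ν₀) ∂μ :=
        (setLIntegral_const _ _).symm
    _ ≤ ∫⁻ ζ in ball ζ₀ r, ENNReal.ofReal (g ζ ^ 2 * w ζ) ∂μ :=
        setLIntegral_mono' measurableSet_ball fun ζ hζ => ENNReal.ofReal_le_ofReal (hpoint ζ hζ)
    _ ≤ ∫⁻ ζ, ENNReal.ofReal (g ζ ^ 2 * w ζ) ∂μ := setLIntegral_le_lintegral _ _

end HolderLowerBound

theorem le_rpow_mul_rpow_of_sq_mul_rpow_le {b r M σ d K : ℝ} (hb : 0 ≤ b) (hr : 0 ≤ r)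
    (hM : 0 ≤ M) (hσ : 0 < σ) (hd : 0 ≤ d) (hbr : b = M * r ^ σ) (hK : b ^ 2 * r ^ d ≤ K) :
    b ≤ M ^ (d / (d + 2 * σ)) * K ^ (σ / (d + 2 * σ)) := by
  have hdσ : 0 < d + 2 * σ := by linarith
  have hK0 : 0 ≤ K := (by positivity : 0 ≤ b ^ 2 * r ^ d).trans hK
  have hbd : b ^ d = M ^ d * r ^ (σ * d) := by
    rw [hbr, mul_rpow hM (by positivity), ← rpow_mul hr]
  have hpow : b ^ (d + 2 * σ) ≤ M ^ d * K ^ σ :=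
    calc b ^ (d + 2 * σ) = M ^ d * (b ^ 2 * r ^ d) ^ σ := by
          rw [rpow_add' hb hdσ.ne', hbd, mul_rpow (by positivity) (by positivity),
            ← rpow_mul hr, ← rpow_natCast, ← rpow_mul hb]
          push_cast
          ring_nf
      _ ≤ M ^ d * K ^ σ := by gcongr
  calc b = (b ^ (d + 2 * σ)) ^ (d + 2 * σ)⁻¹ := (rpow_rpow_inv hb hdσ.ne').symm
    _ ≤ (M ^ d * K ^ σ) ^ (d + 2 * σ)⁻¹ := by gcongr
    _ = M ^ (d / (d + 2 * σ)) * K ^ (σ / (d + 2 * σ)) := by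
        rw [mul_rpow (by positivity) (by positivity), ← rpow_mul hM, ← rpow_mul hK0,
          div_eq_mul_inv, div_eq_mul_inv]

/-- Interpolation between a Hölder bound and a weighted `L²` bound gives a
pointwise bound (the estimate used in Section 5, with constant
`C₁₂ = 2(3/(4πν₀))^{σ/(3+2σ)}`). -/
theorem stmt_5 (σ ν₀ M A : ℝ) (hσ : 0 < σ) (hν₀ : 0 < ν₀) (hM : 0 < M) (hA : 0 ≤ A)
    (g w : E3 → ℝ)
    (hg : ∀ ζ ω : E3, |g ζ - g ω| ≤ M * ‖ζ - ω‖ ^ σ)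
    (hw : ∀ ζ : E3, ν₀ ≤ w ζ)
    (hint : (∫⁻ ζ : E3, ENNReal.ofReal (g ζ ^ 2 * w ζ)) ≤ ENNReal.ofReal (A ^ 2)) :
    ∀ ζ : E3, |g ζ| ≤
      2 * (3 / (4 * π * ν₀)) ^ (σ / (3 + 2 * σ)) * M ^ (3 / (3 + 2 * σ)) *
        A ^ (2 * σ / (3 + 2 * σ)) := by
  intro ζ₀
  set r := (|g ζ₀| / 2 / M) ^ σ⁻¹
  have hr : M * r ^ σ = |g ζ₀| / 2 := by
    rw [rpow_inv_rpow (by positivity) hσ.ne']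
    field_simp
  have hball := (ofReal_mul_measure_ball_le_lintegral_sq_mul (μ := volume) hM.le hσ.le hν₀.le
    hg hw hr.le).trans hint
  rw [EuclideanSpace.volume_ball_fin_three, ← ENNReal.ofReal_pow (by positivity),
    ← ENNReal.ofReal_mul (by positivity), ← ENNReal.ofReal_mul (by positivity),
    ENNReal.ofReal_le_ofReal_iff (by positivity)] at hball
  have hK : (|g ζ₀| / 2) ^ 2 * r ^ (3 : ℝ) ≤ 3 / (4 * π * ν₀) * A ^ 2 := by
    rw [rpow_ofNat, div_mul_eq_mul_div, le_div_iff₀ (by positivity)]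
    linarith
  have hhalf := le_rpow_mul_rpow_of_sq_mul_rpow_le (by positivity) (by positivity) hM.le hσ
    zero_le_three hr.symm hK
  rw [mul_rpow (by positivity) (sq_nonneg A), ← rpow_natCast, ← rpow_mul hA] at hhalf
  push_cast at hhalf
  rw [mul_div_assoc]
  linarith
end
end

section
/- Let Ω be a nonempty bounded open convex subset of ℝ³ and let x, y ∈ Ω with dist(x,∂Ω) ≥ d₀ > 0 and dist(y,∂Ω) ≥ d₀. Then there is a constant C₆ depending only on Ω such that for every ζ ∈ ℝ³∖{0}: |p(x,ζ) − p(y,ζ)| ≤ C₆(1+d₀⁻¹)|x−y| and |τ₋(x,ζ) − τ₋(y,ζ)| ≤ C₆(1+d₀⁻¹)|x−y|/|ζ|. -/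
open MeasureTheory Real Set
open scoped ENNReal NNReal

noncomputable section

/-! From a point `x` whose distance to `∂Ω` is at least `d₀`, the whole ball `B(x, d₀)` lies in `Ω`.
By convexity, the cone spanned by `B(x, d₀)` and the backward segment of `x` lies in `Ω`; sliding
`x` to a nearby `y` therefore shortens the backward segment by at most the factor
`1 - |x - y| / d₀`. As `τ₋ ≤ diam Ω / |ζ|`, this gives
`|τ₋(x,ζ) - τ₋(y,ζ)| ≤ diam Ω |x - y| / (d₀ |ζ|)`, and `p = x - τ₋ ζ` inherits the bound. -/

open Metric

section Geometry

variable {E : Type*} [NormedAddCommGroup E] [NormedSpace ℝ E]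

theorem infDist_frontier_le_infDist_compl [FiniteDimensional ℝ E] {s : Set E} {x : E}
    (hx : x ∈ s) (hs : s ≠ univ) : infDist x (frontier s) ≤ infDist x sᶜ := by
  obtain ⟨w, hw, hdist⟩ := exists_mem_frontier_infDist_compl_eq_dist hx hs
  exact hdist ▸ infDist_le_dist_of_mem hw

theorem ball_subset_of_le_infDist_frontier [Nontrivial E] [FiniteDimensional ℝ E] {s : Set E}
    {x : E} {d : ℝ} (hbd : Bornology.IsBounded s) (hx : x ∈ s) (hd : d ≤ infDist x (frontier s)) :
    ball x d ⊆ s :=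
  have hs : s ≠ univ := fun h => NormedSpace.unbounded_univ ℝ E (h ▸ hbd)
  (ball_subset_ball (hd.trans (infDist_frontier_le_infDist_compl hx hs))).trans
    ball_infDist_compl_subset

theorem Convex.add_smul_sub_mem_of_ball_subset {Ω : Set E} {x y a : E} {d μ : ℝ}
    (hconv : Convex ℝ Ω) (hball : ball x d ⊆ Ω) (ha : a ∈ Ω) (hμ0 : 0 ≤ μ) (hμ1 : μ < 1)
    (hxy : ‖x - y‖ < (1 - μ) * d) : y + μ • (a - x) ∈ Ω := by
  have h1μ : 0 < 1 - μ := by linarith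
  set w := x + (1 - μ)⁻¹ • (y - x)
  have hw : w ∈ Ω := by
    refine hball (mem_ball_iff_norm.2 ?_)
    rw [add_sub_cancel_left, norm_smul, norm_inv, Real.norm_of_nonneg h1μ.le, norm_sub_rev,
      inv_mul_lt_iff₀ h1μ]
    exact hxy
  have hcombo : y + μ • (a - x) = μ • a + (1 - μ) • w := by
    simp only [w, smul_add, smul_inv_smul₀ h1μ.ne', sub_smul, one_smul, smul_sub]
    abel
  exact hcombo ▸ hconv ha hw hμ0 h1μ.le (by ring)

end Geometry

section ExitTime

variable {Ω : Set E3} {x y ζ : E3}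

theorem tauMinus_nonneg (Ω : Set E3) (x ζ : E3) : 0 ≤ tauMinus Ω x ζ :=
  Real.sSup_nonneg fun _ ht => ht.1

theorem sub_smul_mem_of_lt_tauMinus {s : ℝ} (hs0 : 0 ≤ s) (hs : s < tauMinus Ω x ζ) :
    x - s • ζ ∈ Ω := by
  obtain ⟨t, ht, hst⟩ := exists_lt_of_lt_csSup (by exact ⟨0, le_rfl, by simp⟩) hs
  exact ht.2 s ⟨hs0, hst⟩

theorem le_diam_div_norm_of_sub_smul_mem (hbd : Bornology.IsBounded Ω) (hx : x ∈ Ω)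
    (hζ : ζ ≠ 0) {t : ℝ} (ht : ∀ s ∈ Ico (0 : ℝ) t, x - s • ζ ∈ Ω) : t ≤ diam Ω / ‖ζ‖ := by
  have hζ' : 0 < ‖ζ‖ := norm_pos_iff.2 hζ
  by_contra! hlt
  obtain ⟨s, hs1, hs2⟩ := exists_between hlt
  have hs0 : 0 ≤ s := (div_nonneg diam_nonneg hζ'.le).trans hs1.le
  have hdist := dist_le_diam_of_mem hbd hx (ht s ⟨hs0, hs2⟩)
  rw [dist_eq_norm, sub_sub_cancel, norm_smul, Real.norm_of_nonneg hs0] at hdist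
  exact hs1.not_ge ((le_div_iff₀ hζ').2 hdist)

theorem tauMinus_le_diam_div_norm (hbd : Bornology.IsBounded Ω) (hx : x ∈ Ω) (hζ : ζ ≠ 0) :
    tauMinus Ω x ζ ≤ diam Ω / ‖ζ‖ :=
  csSup_le ⟨0, le_rfl, by simp⟩ fun _ ht => le_diam_div_norm_of_sub_smul_mem hbd hx hζ ht.2

theorem le_tauMinus (hbd : Bornology.IsBounded Ω) (hx : x ∈ Ω) (hζ : ζ ≠ 0) {t : ℝ}
    (ht0 : 0 ≤ t) (ht : ∀ s ∈ Ico (0 : ℝ) t, x - s • ζ ∈ Ω) : t ≤ tauMinus Ω x ζ :=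
  le_csSup ⟨diam Ω / ‖ζ‖, fun _ hu => le_diam_div_norm_of_sub_smul_mem hbd hx hζ hu.2⟩ ⟨ht0, ht⟩

theorem tauMinus_mul_one_sub_le (hconv : Convex ℝ Ω) (hbd : Bornology.IsBounded Ω) (hy : y ∈ Ω)
    (hζ : ζ ≠ 0) {d : ℝ} (hball : ball x d ⊆ Ω) (hxy : ‖x - y‖ < d) :
    tauMinus Ω x ζ * (1 - ‖x - y‖ / d) ≤ tauMinus Ω y ζ := by
  set r := ‖x - y‖ / d
  have hd : 0 < d := (norm_nonneg _).trans_lt hxy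
  have h1r : 0 < 1 - r := by have := (div_lt_one hd).2 hxy; linarith
  refine le_tauMinus hbd hy hζ (mul_nonneg (tauMinus_nonneg Ω x ζ) h1r.le) ?_
  rintro s ⟨hs0, hs⟩
  -- `y - s ζ` lies in the cone over `B(x, d)` with apex `x - t ζ`, `s / (1 - r) < t < τ₋(x, ζ)`
  obtain ⟨t, hst, ht⟩ := exists_between ((div_lt_iff₀ h1r).2 hs)
  have ht0 : 0 < t := (div_nonneg hs0 h1r.le).trans_lt hst
  have hμ : s / t < 1 - r := by rwa [div_lt_iff₀ ht0, mul_comm, ← div_lt_iff₀ h1r]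
  have hxy' : ‖x - y‖ < (1 - s / t) * d := by
    have : ‖x - y‖ = r * d := (div_mul_cancel₀ _ hd.ne').symm
    rw [this]; exact mul_lt_mul_of_pos_right (by linarith) hd
  have hmem := hconv.add_smul_sub_mem_of_ball_subset hball
    (sub_smul_mem_of_lt_tauMinus ht0.le ht) (div_nonneg hs0 ht0.le)
    (hμ.trans_le (by simp only [r]; linarith [div_nonneg (norm_nonneg (x - y)) hd.le])) hxy'
  rwa [sub_sub_cancel_left, smul_neg, smul_smul, div_mul_cancel₀ _ ht0.ne', ← sub_eq_add_neg]
    at hmem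

theorem abs_tauMinus_sub_tauMinus_le (hconv : Convex ℝ Ω) (hbd : Bornology.IsBounded Ω)
    (hx : x ∈ Ω) (hy : y ∈ Ω) (hζ : ζ ≠ 0) {d : ℝ} (hd : 0 < d) (hbx : ball x d ⊆ Ω)
    (hby : ball y d ⊆ Ω) :
    |tauMinus Ω x ζ - tauMinus Ω y ζ| ≤ diam Ω / ‖ζ‖ * (‖x - y‖ / d) := by
  have hτx := tauMinus_le_diam_div_norm hbd hx hζ
  have hτy := tauMinus_le_diam_div_norm hbd hy hζ
  have hτx0 := tauMinus_nonneg Ω x ζ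
  have hτy0 := tauMinus_nonneg Ω y ζ
  have hr0 : 0 ≤ ‖x - y‖ / d := div_nonneg (norm_nonneg _) hd.le
  rw [abs_sub_le_iff]
  rcases lt_or_ge ‖x - y‖ d with hlt | hge
  · have h₁ := tauMinus_mul_one_sub_le hconv hbd hy hζ hbx hlt
    have h₂ := tauMinus_mul_one_sub_le hconv hbd hx hζ hby (by rwa [norm_sub_rev])
    rw [norm_sub_rev] at h₂
    constructor <;> nlinarith
  · have hr1 : 1 ≤ ‖x - y‖ / d := (one_le_div hd).2 hge
    constructor <;> nlinarith

end ExitTime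

theorem stmt_6_general (Ω : Set E3) (hbd : Bornology.IsBounded Ω)
    (hconv : Convex ℝ Ω) :
    ∃ C₆ : ℝ, 0 < C₆ ∧ ∀ d₀ : ℝ, 0 < d₀ → ∀ x ∈ Ω, ∀ y ∈ Ω,
      d₀ ≤ Metric.infDist x (frontier Ω) → d₀ ≤ Metric.infDist y (frontier Ω) →
      ∀ ζ : E3, ζ ≠ 0 →
        ‖exitPoint Ω x ζ - exitPoint Ω y ζ‖ ≤ C₆ * (1 + d₀⁻¹) * ‖x - y‖ ∧
        |tauMinus Ω x ζ - tauMinus Ω y ζ| ≤ C₆ * (1 + d₀⁻¹) * ‖x - y‖ / ‖ζ‖ := by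
  refine ⟨diam Ω + 1, by linarith [diam_nonneg (s := Ω)], ?_⟩
  intro d₀ hd x hx y hy hix hiy ζ hζ
  have hζ' : 0 < ‖ζ‖ := norm_pos_iff.2 hζ
  have hτ := abs_tauMinus_sub_tauMinus_le hconv hbd hx hy hζ hd
    (ball_subset_of_le_infDist_frontier hbd hx hix) (ball_subset_of_le_infDist_frontier hbd hy hiy)
  have hτζ : |tauMinus Ω x ζ - tauMinus Ω y ζ| * ‖ζ‖ ≤ diam Ω * ‖x - y‖ * d₀⁻¹ := by
    rw [← le_div_iff₀ hζ']
    exact hτ.trans_eq (by ring)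
  have hC : diam Ω * ‖x - y‖ * d₀⁻¹ ≤ (diam Ω + 1) * (1 + d₀⁻¹) * ‖x - y‖ := by
    have := mul_nonneg (inv_nonneg.2 hd.le) (norm_nonneg (x - y))
    nlinarith [diam_nonneg (s := Ω), norm_nonneg (x - y)]
  refine ⟨?_, (le_div_iff₀ hζ').2 (hτζ.trans hC)⟩
  calc ‖exitPoint Ω x ζ - exitPoint Ω y ζ‖
      = ‖(x - y) - (tauMinus Ω x ζ - tauMinus Ω y ζ) • ζ‖ := by
        simp only [exitPoint, sub_smul]; congr 1; abel
    _ ≤ ‖x - y‖ + |tauMinus Ω x ζ - tauMinus Ω y ζ| * ‖ζ‖ := by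
        rw [← Real.norm_eq_abs, ← norm_smul]; exact norm_sub_le _ _
    _ ≤ (diam Ω + 1) * (1 + d₀⁻¹) * ‖x - y‖ := by
        nlinarith [diam_nonneg (s := Ω), norm_nonneg (x - y), inv_nonneg.2 hd.le]

/-- Lipschitz continuity of the exit point and exit time in the space variable
(Proposition 3.1). -/
theorem stmt_6 (Ω : Set E3) (hne : Ω.Nonempty) (hbd : Bornology.IsBounded Ω)
    (hop : IsOpen Ω) (hconv : Convex ℝ Ω) :
    ∃ C₆ : ℝ, 0 < C₆ ∧ ∀ d₀ : ℝ, 0 < d₀ → ∀ x ∈ Ω, ∀ y ∈ Ω,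
      d₀ ≤ Metric.infDist x (frontier Ω) → d₀ ≤ Metric.infDist y (frontier Ω) →
      ∀ ζ : E3, ζ ≠ 0 →
        ‖exitPoint Ω x ζ - exitPoint Ω y ζ‖ ≤ C₆ * (1 + d₀⁻¹) * ‖x - y‖ ∧
        |tauMinus Ω x ζ - tauMinus Ω y ζ| ≤ C₆ * (1 + d₀⁻¹) * ‖x - y‖ / ‖ζ‖ :=
  stmt_6_general Ω hbd hconv
end
end

section
/- Let Ω be a nonempty bounded open convex subset of ℝ³ with diameter R, let x ∈ Ω with d₀ = dist(x,∂Ω) > 0, let ζ ∈ ℝ³∖{0}, and set X₀ = p(x,ζ). Then every point z on the closed segment from x to X₀ satisfies |z − X₀| ≤ (R/d₀) · dist(z, ∂Ω). -/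
open MeasureTheory Real Set
open scoped ENNReal NNReal

noncomputable section

open Set.Notation in
-- ball around point in open set doesn't meet frontier, hence subset by connectedness
lemma ball_infDist_frontier_subset' {Ω : Set E3} (hop : IsOpen Ω) {x : E3} (hx : x ∈ Ω)
    (hd : 0 < Metric.infDist x (frontier Ω)) :
    Metric.ball x (Metric.infDist x (frontier Ω)) ⊆ Ω := by
  set B := Metric.ball x (Metric.infDist x (frontier Ω)) with hB
  have hdisj : Disjoint (frontier Ω) B := (Metric.disjoint_ball_infDist).symm
  have hclopen : IsClopen (B ↓∩ Ω) := isClopen_preimage_val hop hdisj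
  have hpre : IsPreconnected B := (convex_ball x _).isPreconnected
  haveI : PreconnectedSpace B := Subtype.preconnectedSpace hpre
  have hxB : x ∈ B := Metric.mem_ball_self hd
  have : (B ↓∩ Ω) = univ := hclopen.eq_univ ⟨⟨x, hxB⟩, hx⟩
  intro y hy
  have : (⟨y, hy⟩ : B) ∈ (B ↓∩ Ω) := this ▸ mem_univ _
  exact this

lemma exit_mem_closure {Ω : Set E3} (hne : Ω.Nonempty) (hbd : Bornology.IsBounded Ω)
    {x : E3} (hx : x ∈ Ω) (ζ : E3) (hζ : ζ ≠ 0) :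
    exitPoint Ω x ζ ∈ closure Ω := by
  set S := {t : ℝ | 0 ≤ t ∧ ∀ s ∈ Set.Ico (0 : ℝ) t, x - s • ζ ∈ Ω} with hS
  have h0 : (0 : ℝ) ∈ S := ⟨le_refl 0, fun s hs => absurd hs.2 (not_lt.2 hs.1)⟩
  obtain ⟨M, hM⟩ := hbd.subset_ball x
  have hζn : (0:ℝ) < ‖ζ‖ := norm_pos_iff.2 hζ
  have hMpos : 0 < M := by
    have := hM hx
    exact lt_of_le_of_lt dist_nonneg (Metric.mem_ball.1 this)
  have hbdd : BddAbove S := by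
    refine ⟨M / ‖ζ‖, fun t ht => ?_⟩
    by_contra hlt
    push_neg at hlt
    have hs : (M / ‖ζ‖) ∈ Set.Ico (0:ℝ) t := ⟨le_of_lt (div_pos hMpos hζn), hlt⟩
    have := hM (ht.2 _ hs)
    rw [Metric.mem_ball, dist_eq_norm] at this
    simp only [sub_sub_cancel_left, norm_neg, norm_smul, Real.norm_eq_abs,
      abs_of_nonneg hs.1] at this
    rw [div_mul_cancel₀ _ (ne_of_gt hζn)] at this
    exact lt_irrefl _ this
  set τ := sSup S with hτ
  have hτ0 : 0 ≤ τ := le_csSup hbdd h0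
  have hmem : ∀ s ∈ Set.Ico (0:ℝ) τ, x - s • ζ ∈ Ω := by
    intro s hs
    obtain ⟨t, htS, hst⟩ := exists_lt_of_lt_csSup ⟨0, h0⟩ hs.2
    exact htS.2 s ⟨hs.1, hst⟩
  have hτeq : tauMinus Ω x ζ = τ := rfl
  rcases eq_or_lt_of_le hτ0 with h | h
  · have : exitPoint Ω x ζ = x := by
      unfold exitPoint
      rw [hτeq, ← h, zero_smul, sub_zero]
    rw [this]; exact subset_closure hx
  · have hcont : Continuous fun s : ℝ => x - s • ζ :=
      continuous_const.sub (continuous_id.smul continuous_const)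
    have h1 : exitPoint Ω x ζ ∈ (fun s : ℝ => x - s • ζ) '' closure (Set.Ico 0 τ) := by
      rw [closure_Ico (ne_of_lt h)]
      exact ⟨τ, ⟨hτ0, le_refl τ⟩, rfl⟩
    have h2 : (fun s : ℝ => x - s • ζ) '' closure (Set.Ico 0 τ) ⊆
        closure ((fun s : ℝ => x - s • ζ) '' Set.Ico 0 τ) :=
      image_closure_subset_closure_image hcont
    refine closure_mono ?_ (h2 h1)
    rintro y ⟨s, hs, rfl⟩
    exact hmem s hs

/-- Along a backward trajectory, the distance to the exit point is controlled
by the distance to the boundary (Proposition 3.2). -/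
theorem stmt_7 (Ω : Set E3) (hne : Ω.Nonempty) (hbd : Bornology.IsBounded Ω)
    (hop : IsOpen Ω) (hconv : Convex ℝ Ω)
    (x : E3) (hx : x ∈ Ω) (hd₀ : 0 < Metric.infDist x (frontier Ω))
    (ζ : E3) (hζ : ζ ≠ 0) :
    ∀ z ∈ segment ℝ x (exitPoint Ω x ζ),
      ‖z - exitPoint Ω x ζ‖ ≤
        Metric.diam Ω / Metric.infDist x (frontier Ω) *
          Metric.infDist z (frontier Ω) := by
  set d := Metric.infDist x (frontier Ω) with hd
  set X₀ := exitPoint Ω x ζ with hX₀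
  have hXc : X₀ ∈ closure Ω := exit_mem_closure hne hbd hx ζ hζ
  rintro z ⟨a, b, ha, hb, hab, rfl⟩
  rcases eq_or_lt_of_le ha with h | hapos
  · have hb1 : b = 1 := by linarith
    rw [← h, hb1]
    simp only [zero_smul, one_smul, zero_add, sub_self, norm_zero]
    exact mul_nonneg (div_nonneg Metric.diam_nonneg hd₀.le) Metric.infDist_nonneg
  set z := a • x + b • X₀ with hz
  -- ball around z of radius a * d is inside Ω
  have hball : Metric.ball z (a * d) ⊆ Ω := by
    intro y hy
    rw [Metric.mem_ball, dist_eq_norm] at hy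
    set u := x + a⁻¹ • (y - z) with hu
    have hu_ball : u ∈ Metric.ball x d := by
      rw [Metric.mem_ball, dist_eq_norm]
      simp only [hu, add_sub_cancel_left, norm_smul, Real.norm_eq_abs,
        abs_of_pos (inv_pos.2 hapos)]
      rw [inv_mul_lt_iff₀ hapos]
      exact hy
    have huΩ : u ∈ interior Ω := by
      rw [hop.interior_eq]
      exact ball_infDist_frontier_subset' hop hx hd₀ hu_ball
    have hyeq : y = a • u + b • X₀ := by
      rw [hu, smul_add, smul_smul, mul_inv_cancel₀ (ne_of_gt hapos), one_smul]
      rw [hz]; abel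
    rw [hyeq, ← hop.interior_eq]
    exact hconv.combo_interior_closure_mem_interior huΩ hXc hapos hb hab
  have hfr_ne : (frontier Ω).Nonempty := by
    by_contra hemp
    rw [not_nonempty_iff_eq_empty] at hemp
    rw [hd, hemp, Metric.infDist_empty] at hd₀
    exact lt_irrefl _ hd₀
  have hzd : a * d ≤ Metric.infDist z (frontier Ω) := by
    haveI := hfr_ne.to_subtype
    rw [Metric.infDist_eq_iInf]
    refine le_ciInf fun w => ?_
    obtain ⟨w, hw⟩ := w
    simp only
    by_contra hlt
    push_neg at hlt
    have : w ∈ Ω := hball (Metric.mem_ball'.2 hlt)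
    have : w ∈ Ω ∩ frontier Ω := ⟨this, hw⟩
    rw [hop.inter_frontier_eq] at this
    exact this
  have hnorm : ‖z - X₀‖ = a * ‖x - X₀‖ := by
    have : z - X₀ = a • (x - X₀) := by
      rw [hz, smul_sub]
      have : b • X₀ - X₀ = -((1 - b) • X₀) := by
        rw [sub_smul, one_smul]; abel
      rw [show a • x + b • X₀ - X₀ = a • x + (b • X₀ - X₀) by abel, this]
      rw [show (1:ℝ) - b = a by linarith]
      abel
    rw [this, norm_smul, Real.norm_eq_abs, abs_of_pos hapos]
  have hdiam : ‖x - X₀‖ ≤ Metric.diam Ω := by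
    rw [← dist_eq_norm, ← Metric.diam_closure]
    exact Metric.dist_le_diam_of_mem hbd.closure (subset_closure hx) hXc
  calc ‖z - X₀‖ = a * ‖x - X₀‖ := hnorm
    _ ≤ a * Metric.diam Ω := by
        exact mul_le_mul_of_nonneg_left hdiam hapos.le
    _ = Metric.diam Ω / d * (a * d) := by
        field_simp
    _ ≤ Metric.diam Ω / d * Metric.infDist z (frontier Ω) := by
        exact mul_le_mul_of_nonneg_left hzd (div_nonneg Metric.diam_nonneg hd₀.le)
end
end
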